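/- arXiv:2601.06951 — 4 statements merged into one kernel-verified Lean document; each statement's English description precedes it below -/
import Mathlib

section
/- Let c > 0 and let F : [0, T] → ℝ be a continuous nonpositive function. If θ : [0, T] → ℝ satisfies θ'' + F·θ = 0 with θ(0) = 1 and θ'(0) = −c, and T ≤ 1/c, then θ(t) ≥ 1 − c·t for all t ∈ [0, T]. -/
/-!
Where `θ ≥ 0` the equation gives `θ'' = -Fθ ≥ 0`, so `θ` is convex there and lies above its
tangent `1 - c t` at `0`. If `θ` became negative in `[0, T]`, then at its first zero `z < T`
this would give `0 = θ z ≥ 1 - c z > 1 - c T ≥ 0`.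
-/

open Set

lemma monotoneOn_Icc_of_hasDerivAt_nonneg {f f' : ℝ → ℝ} {a b : ℝ}
    (hf : ∀ x ∈ Icc a b, HasDerivAt f (f' x) x) (hf' : ∀ x ∈ Icc a b, 0 ≤ f' x) :
    MonotoneOn f (Icc a b) := by
  refine monotoneOn_of_hasDerivWithinAt_nonneg (f' := f') (convex_Icc a b)
    (fun x hx ↦ (hf x hx).continuousAt.continuousWithinAt) (fun x hx ↦ ?_) (fun x hx ↦ ?_)
  · exact (hf x (interior_subset hx)).hasDerivWithinAt
  · exact hf' x (interior_subset hx)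

lemma add_deriv_mul_sub_le_of_hasDerivAt_of_second_nonneg {f f' f'' : ℝ → ℝ} {a b : ℝ}
    (hf : ∀ x ∈ Icc a b, HasDerivAt f (f' x) x) (hf' : ∀ x ∈ Icc a b, HasDerivAt f' (f'' x) x)
    (hf'' : ∀ x ∈ Icc a b, 0 ≤ f'' x) {t : ℝ} (ht : t ∈ Icc a b) :
    f a + f' a * (t - a) ≤ f t := by
  have ha : a ∈ Icc a b := ⟨le_rfl, ht.1.trans ht.2⟩
  have hf'_mono : MonotoneOn f' (Icc a b) := monotoneOn_Icc_of_hasDerivAt_nonneg hf' hf''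
  have hg_mono : MonotoneOn (fun s ↦ f s - f' a * s) (Icc a b) := by
    refine monotoneOn_Icc_of_hasDerivAt_nonneg
      (fun x hx ↦ (hf x hx).sub ((hasDerivAt_id x).const_mul (f' a))) fun x hx ↦ ?_
    simpa using hf'_mono ha hx hx.1
  linarith [hg_mono ha ht ht.1]

lemma ContinuousOn.exists_zero_forall_nonneg_Icc {f : ℝ → ℝ} {a t : ℝ} (ht : a ≤ t)
    (hf : ContinuousOn f (Icc a t)) (ha : 0 < f a) (hft : f t ≤ 0) :
    ∃ z ∈ Icc a t, f z = 0 ∧ ∀ s ∈ Icc a z, 0 ≤ f s := by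
  set S := Icc a t ∩ f ⁻¹' {0}
  have hS : S.Nonempty := intermediate_value_Icc' ht hf ⟨hft, ha.le⟩
  have hS_bdd : BddBelow S := ⟨a, fun x hx ↦ hx.1.1⟩
  obtain ⟨hz, hfz⟩ : sInf S ∈ S :=
    (hf.preimage_isClosed_of_isClosed isClosed_Icc isClosed_singleton).csInf_mem hS hS_bdd
  refine ⟨sInf S, hz, hfz, fun s hs ↦ not_lt.mp fun hfs ↦ ?_⟩
  -- a negative value at `s` would produce, by the intermediate value theorem, a zero before `sInf S`
  obtain ⟨v, hv, hfv⟩ := intermediate_value_Icc' hs.1 (hf.mono (Icc_subset_Icc le_rfl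
    (hs.2.trans hz.2))) ⟨hfs.le, ha.le⟩
  have hv_eq : v = s :=
    le_antisymm hv.2 (hs.2.trans (csInf_le hS_bdd ⟨⟨hv.1, hv.2.trans (hs.2.trans hz.2)⟩, hfv⟩))
  exact hfs.ne (hv_eq ▸ hfv)

theorem stmt_0_general (c T : ℝ) (hc : 0 < c) (hTc : T ≤ 1 / c)
    (F θ θ' : ℝ → ℝ)
    (hFnonpos : ∀ t ∈ Icc 0 T, F t ≤ 0)
    (hθ : ∀ t ∈ Icc 0 T, HasDerivAt θ (θ' t) t)
    (hθ' : ∀ t ∈ Icc 0 T, HasDerivAt θ' (-(F t * θ t)) t)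
    (hθ0 : θ 0 = 1) (hθ'0 : θ' 0 = -c) :
    ∀ t ∈ Icc 0 T, θ t ≥ 1 - c * t := by
  have tangent_le {b : ℝ} (hb : b ≤ T) (hpos : ∀ s ∈ Icc 0 b, 0 ≤ θ s) {t : ℝ}
      (ht : t ∈ Icc 0 b) : 1 - c * t ≤ θ t := by
    have hsub : Icc 0 b ⊆ Icc 0 T := Icc_subset_Icc le_rfl hb
    have := add_deriv_mul_sub_le_of_hasDerivAt_of_second_nonneg (fun x hx ↦ hθ x (hsub hx))
      (fun x hx ↦ hθ' x (hsub hx))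
      (fun x hx ↦ neg_nonneg.mpr (mul_nonpos_of_nonpos_of_nonneg (hFnonpos x (hsub hx))
        (hpos x hx))) ht
    rw [hθ0, hθ'0] at this
    linarith
  have hcT : c * T ≤ 1 := by rwa [le_div_iff₀ hc, mul_comm] at hTc
  have hnonneg (t : ℝ) (ht : t ∈ Icc 0 T) : 0 ≤ θ t := by
    by_contra! hneg
    obtain ⟨z, hz, hθz, hpos⟩ := ContinuousOn.exists_zero_forall_nonneg_Icc ht.1
      (fun x hx ↦ (hθ x ⟨hx.1, hx.2.trans ht.2⟩).continuousAt.continuousWithinAt)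
      (hθ0 ▸ one_pos) hneg.le
    have hzt : z < t := lt_of_le_of_ne hz.2 (by rintro rfl; linarith)
    have := tangent_le (hz.2.trans ht.2) hpos ⟨hz.1, le_rfl⟩
    linarith [mul_lt_mul_of_pos_left (hzt.trans_le ht.2) hc]
  exact fun t ht ↦ tangent_le le_rfl hnonneg ht

/-- If `θ'' + F·θ = 0` on `[0,T]` with `F ≤ 0` continuous, `θ(0) = 1`, `θ'(0) = -c`,
`c > 0` and `T ≤ 1/c`, then `θ(t) ≥ 1 - c·t` on `[0,T]`. -/
theorem stmt_0 (c T : ℝ) (hc : 0 < c) (hT : 0 < T) (hTc : T ≤ 1 / c)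
    (F θ θ' : ℝ → ℝ)
    (hFcont : ContinuousOn F (Icc 0 T))
    (hFnonpos : ∀ t ∈ Icc 0 T, F t ≤ 0)
    (hθ : ∀ t ∈ Icc 0 T, HasDerivAt θ (θ' t) t)
    (hθ' : ∀ t ∈ Icc 0 T, HasDerivAt θ' (-(F t * θ t)) t)
    (hθ0 : θ 0 = 1) (hθ'0 : θ' 0 = -c) :
    ∀ t ∈ Icc 0 T, θ t ≥ 1 - c * t :=
  stmt_0_general c T hc hTc F θ θ' hFnonpos hθ hθ' hθ0 hθ'0
end

section
/- For each c > 0 there exists a unique K₀ ∈ (−∞, 0) such that c·cosh(√|K₀|/c) − √|K₀|·sinh(√|K₀|/c) = c/2. -/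
/-!
Put `t = √(-K₀)/c`; the equation becomes `g t = 1/2` for `g t = cosh t - t sinh t`, independently
of `c`. Since `g' t = -t cosh t`, `g` strictly decreases on `[0, ∞)` from `g 0 = 1`, and `g 2 < 0`,
so every value in `[0, 1)` is taken at exactly one `t > 0`. Finally `K₀ ↦ √(-K₀)/c` is a
bijection from `(-∞, 0)` onto `(0, ∞)`.
-/

open Real Set

noncomputable def coshSubMulSinh (t : ℝ) : ℝ := cosh t - t * sinh t

theorem hasDerivAt_coshSubMulSinh (t : ℝ) :
    HasDerivAt coshSubMulSinh (-(t * cosh t)) t := by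
  have h : HasDerivAt (fun t => cosh t - t * sinh t) (sinh t - (1 * sinh t + t * cosh t)) t :=
    (hasDerivAt_cosh t).sub ((hasDerivAt_id' t).mul (hasDerivAt_sinh t))
  rw [show -(t * cosh t) = sinh t - (1 * sinh t + t * cosh t) by ring]
  exact h

theorem continuous_coshSubMulSinh : Continuous coshSubMulSinh :=
  continuous_cosh.sub (continuous_id.mul continuous_sinh)

theorem strictAntiOn_coshSubMulSinh : StrictAntiOn coshSubMulSinh (Ici 0) := by
  refine strictAntiOn_of_deriv_neg (convex_Ici 0) continuous_coshSubMulSinh.continuousOn ?_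
  intro t ht
  rw [interior_Ici] at ht
  rw [(hasDerivAt_coshSubMulSinh t).deriv, neg_lt_zero]
  exact mul_pos ht (cosh_pos t)

theorem coshSubMulSinh_zero : coshSubMulSinh 0 = 1 := by
  simp [coshSubMulSinh]

theorem coshSubMulSinh_two_neg : coshSubMulSinh 2 < 0 := by
  have h3 : 3 < exp 2 := by linarith [add_one_lt_exp (two_ne_zero : (2 : ℝ) ≠ 0)]
  have h1 : exp (-2) < 1 := exp_lt_one_iff.mpr (by norm_num)
  have : coshSubMulSinh 2 = (3 * exp (-2) - exp 2) / 2 := by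
    rw [coshSubMulSinh, cosh_eq, sinh_eq]
    ring
  rw [this]
  linarith

theorem existsUnique_pos_coshSubMulSinh_eq {y : ℝ} (hy₀ : 0 ≤ y) (hy₁ : y < 1) :
    ∃! t : ℝ, 0 < t ∧ coshSubMulSinh t = y := by
  have hmem : y ∈ Icc (coshSubMulSinh 2) (coshSubMulSinh 0) := by
    rw [coshSubMulSinh_zero]
    exact ⟨coshSubMulSinh_two_neg.le.trans hy₀, hy₁.le⟩
  obtain ⟨t, ht, hty⟩ :=
    intermediate_value_Icc' zero_le_two continuous_coshSubMulSinh.continuousOn hmem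
  have ht₀ : 0 < t := by
    refine ht.1.lt_of_ne ?_
    rintro rfl
    rw [coshSubMulSinh_zero] at hty
    exact hy₁.ne' hty
  refine ⟨t, ⟨ht₀, hty⟩, fun s ⟨hs, hsy⟩ => ?_⟩
  exact strictAntiOn_coshSubMulSinh.injOn hs.le ht₀.le (hsy.trans hty.symm)

/-- For every `c > 0` there is a unique `K₀ < 0` with
`c cosh(√(-K₀)/c) - √(-K₀) sinh(√(-K₀)/c) = c/2`. -/
theorem stmt_5 (c : ℝ) (hc : 0 < c) :
    ∃! K₀ : ℝ, K₀ < 0 ∧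
      c * Real.cosh (Real.sqrt (-K₀) / c)
        - Real.sqrt (-K₀) * Real.sinh (Real.sqrt (-K₀) / c) = c / 2 := by
  have hrescale : ∀ x : ℝ, c * cosh (x / c) - x * sinh (x / c) = c * coshSubMulSinh (x / c) := by
    intro x
    rw [coshSubMulSinh]
    field_simp
  have hhalf : ∀ x : ℝ, c * coshSubMulSinh (x / c) = c / 2 ↔ coshSubMulSinh (x / c) = 1 / 2 := by
    intro x
    rw [← mul_one_div c 2]
    exact mul_right_inj' hc.ne'
  obtain ⟨t, ⟨ht, hteq⟩, huniq⟩ :=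
    existsUnique_pos_coshSubMulSinh_eq (y := 1 / 2) (by norm_num) (by norm_num)
  have hsqrt : sqrt (-(-(c * t) ^ 2)) = c * t := by
    rw [neg_neg, sqrt_sq (mul_pos hc ht).le]
  refine ⟨-(c * t) ^ 2, ⟨neg_neg_of_pos (pow_pos (mul_pos hc ht) 2), ?_⟩, ?_⟩
  · rw [hrescale, hhalf, hsqrt, mul_div_cancel_left₀ t hc.ne']
    exact hteq
  · rintro K ⟨hK, hKeq⟩
    rw [hrescale, hhalf] at hKeq
    have hpos : 0 < sqrt (-K) / c := div_pos (sqrt_pos.mpr (neg_pos.mpr hK)) hc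
    have hsq : sqrt (-K) = c * t := by
      rw [← huniq _ ⟨hpos, hKeq⟩]
      field_simp
    have hK_sq := sq_sqrt (neg_nonneg.mpr hK.le)
    rw [hsq] at hK_sq
    linarith
end

section
/- Let c > 0 and let K₀ < 0 be the unique negative number with c·cosh(√|K₀|/c) − √|K₀|·sinh(√|K₀|/c) = c/2. Then K₀ < −c²/2. -/
open Real

/-! With `u = √(-K₀) / c` the equation reads `cosh u - u sinh u = 1 / 2`. Since `tanh u < u` for
`u > 0`, we get `cosh u - u sinh u > (1 - u²) cosh u ≥ 1 - u²`, so `u² ≤ 1 / 2` is impossible. -/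

theorem Real.sinh_lt_mul_cosh {x : ℝ} (hx : 0 < x) : sinh x < x * cosh x := by
  obtain ⟨ξ, ⟨hξ_pos, hξ_lt⟩, hξ⟩ := exists_hasDerivAt_eq_slope sinh cosh hx
    continuous_sinh.continuousOn (fun y _ ↦ hasDerivAt_sinh y)
  have hcosh : cosh ξ < cosh x := by
    rw [cosh_lt_cosh, abs_of_pos hξ_pos, abs_of_pos hx]
    exact hξ_lt
  rw [sinh_zero, sub_zero, sub_zero, eq_div_iff hx.ne'] at hξ
  nlinarith

theorem Real.half_lt_cosh_sub_mul_sinh {u : ℝ} (hu : 0 < u) (hu2 : u ^ 2 ≤ 1 / 2) :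
    1 / 2 < cosh u - u * sinh u := by
  have hsinh : u * sinh u < u ^ 2 * cosh u := by
    nlinarith [mul_lt_mul_of_pos_left (sinh_lt_mul_cosh hu) hu]
  nlinarith [one_le_cosh u, mul_le_mul_of_nonneg_right hu2 (cosh_pos u).le]

/-- If `c > 0` and `K₀ < 0` satisfies
`c cosh(√(-K₀)/c) - √(-K₀) sinh(√(-K₀)/c) = c/2`, then `K₀ < -c²/2`. -/
theorem stmt_6 (c K₀ : ℝ) (hc : 0 < c) (hK₀ : K₀ < 0)
    (heq : c * Real.cosh (Real.sqrt (-K₀) / c)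
      - Real.sqrt (-K₀) * Real.sinh (Real.sqrt (-K₀) / c) = c / 2) :
    K₀ < -c ^ 2 / 2 := by
  set u := √(-K₀) / c with hu_def
  have hu : 0 < u := div_pos (sqrt_pos.mpr (neg_pos.mpr hK₀)) hc
  have hsqrt : √(-K₀) = c * u := by rw [hu_def, mul_div_cancel₀ _ hc.ne']
  have hK₀_sq : -K₀ = (c * u) ^ 2 := by rw [← hsqrt, sq_sqrt (neg_nonneg.mpr hK₀.le)]
  have hcu : cosh u - u * sinh u = 1 / 2 := by
    apply mul_left_cancel₀ hc.ne'
    rw [hsqrt] at heq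
    linear_combination heq
  have hu2 : 1 / 2 < u ^ 2 := by
    by_contra! hu2
    exact (half_lt_cosh_sub_mul_sinh hu hu2).ne' hcu
  nlinarith [mul_lt_mul_of_pos_left hu2 (pow_pos hc 2)]
end

section
/- Let c > 0, T ≤ 1/c, F : [0,T] → ℝ continuous and nonpositive, θ the solution of θ'' + Fθ = 0 with θ(0) = 1, θ'(0) = −c, and V(t) = ∫₀ᵗ θ. Then V(t) ≥ 0 for all t ∈ [0,T], V(0) = 0, and V is nondecreasing on [0,T]. -/
open Real Set intervalIntegral
open MeasureTheory

/-! Where `θ ≥ 0` we have `θ'' = -Fθ ≥ 0`, so `θ` lies above its tangent line `1 - c t` at `0`.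
At the first point `a` where `θ` would become nonpositive this gives
`θ a ≥ 1 - c a ≥ 1 - c T ≥ 0`, with equality only if `a = T`; hence `θ` never becomes negative
on `[0, T]`, and `V' = θ ≥ 0`. -/

section DerivOnIcc

variable {f f' : ℝ → ℝ} {a b : ℝ}

theorem monotoneOn_Icc_of_hasDerivAt_of_nonneg (hf : ∀ t ∈ Icc a b, HasDerivAt f (f' t) t)
    (hf' : ∀ t ∈ Ioo a b, 0 ≤ f' t) : MonotoneOn f (Icc a b) := by
  refine monotoneOn_of_hasDerivWithinAt_nonneg (f' := f') (convex_Icc a b)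
    (fun t ht => (hf t ht).continuousAt.continuousWithinAt) (fun t ht => ?_) (fun t ht => ?_)
  · rw [interior_Icc] at ht ⊢
    exact (hf t (Ioo_subset_Icc_self ht)).hasDerivWithinAt
  · rw [interior_Icc] at ht
    exact hf' t ht

theorem add_mul_sub_le_of_monotoneOn_deriv (hf : ∀ t ∈ Icc a b, HasDerivAt f (f' t) t)
    (hf' : MonotoneOn f' (Icc a b)) {t : ℝ} (ht : t ∈ Icc a b) :
    f a + f' a * (t - a) ≤ f t := by
  have ha : a ∈ Icc a b := ⟨le_rfl, ht.1.trans ht.2⟩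
  have hg : MonotoneOn (fun s => f s - f' a * s) (Icc a b) :=
    monotoneOn_Icc_of_hasDerivAt_of_nonneg
      (fun s hs => ((hf s hs).sub ((hasDerivAt_id s).const_mul (f' a))).congr_deriv (by ring))
      (fun s hs => sub_nonneg.2 (hf' ha (Ioo_subset_Icc_self hs) hs.1.le))
  have := hg ha ht ht.1
  simp only at this
  linarith

end DerivOnIcc

theorem exists_first_nonpos {f : ℝ → ℝ} {a b : ℝ} (hab : a ≤ b) (hf : ContinuousOn f (Icc a b))
    (hb : f b ≤ 0) : ∃ x ∈ Icc a b, f x ≤ 0 ∧ ∀ s ∈ Ico a x, 0 < f s := by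
  have hclosed : IsClosed (Icc a b ∩ f ⁻¹' Iic 0) :=
    hf.preimage_isClosed_of_isClosed isClosed_Icc isClosed_Iic
  obtain ⟨x, ⟨hx, hfx⟩, hleast⟩ :=
    (isCompact_Icc.of_isClosed_subset hclosed inter_subset_left).exists_isLeast
      ⟨b, ⟨hab, le_rfl⟩, hb⟩
  refine ⟨x, hx, hfx, fun s hs => lt_of_not_ge fun hfs => ?_⟩
  exact hs.2.not_ge (hleast ⟨⟨hs.1, hs.2.le.trans hx.2⟩, hfs⟩)

theorem add_mul_sub_le_of_hasDerivAt_neg_mul {F θ θ' : ℝ → ℝ} {a b : ℝ} (hab : a ≤ b)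
    (hF : ∀ t ∈ Ioo a b, F t ≤ 0) (hθ : ∀ t ∈ Icc a b, HasDerivAt θ (θ' t) t)
    (hθ' : ∀ t ∈ Icc a b, HasDerivAt θ' (-(F t * θ t)) t) (hθpos : ∀ t ∈ Ioo a b, 0 ≤ θ t) :
    θ a + θ' a * (b - a) ≤ θ b := by
  have hconvex : MonotoneOn θ' (Icc a b) :=
    monotoneOn_Icc_of_hasDerivAt_of_nonneg hθ'
      (fun t ht => by nlinarith [hF t ht, hθpos t ht])
  exact add_mul_sub_le_of_monotoneOn_deriv hθ hconvex ⟨hab, le_rfl⟩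

theorem nonneg_of_hasDerivAt_neg_mul {c T : ℝ} {F θ θ' : ℝ → ℝ} (hc : 0 < c) (hTc : T ≤ 1 / c)
    (hF : ∀ t ∈ Icc 0 T, F t ≤ 0) (hθ : ∀ t ∈ Icc 0 T, HasDerivAt θ (θ' t) t)
    (hθ' : ∀ t ∈ Icc 0 T, HasDerivAt θ' (-(F t * θ t)) t) (hθ0 : θ 0 = 1) (hθ'0 : θ' 0 = -c) :
    ∀ t ∈ Icc 0 T, 0 ≤ θ t := by
  intro t ht
  by_contra! hneg
  have hθcont : ContinuousOn θ (Icc 0 t) := fun s hs =>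
    (hθ s ⟨hs.1, hs.2.trans ht.2⟩).continuousAt.continuousWithinAt
  obtain ⟨a, ha, hθa, hpos⟩ := exists_first_nonpos ht.1 hθcont hneg.le
  have hsub : Icc 0 a ⊆ Icc 0 T := Icc_subset_Icc le_rfl (ha.2.trans ht.2)
  have htangent : 1 - c * a ≤ θ a := by
    have := add_mul_sub_le_of_hasDerivAt_neg_mul ha.1
      (fun s hs => hF s (hsub (Ioo_subset_Icc_self hs))) (fun s hs => hθ s (hsub hs))
      (fun s hs => hθ' s (hsub hs)) (fun s hs => (hpos s (Ioo_subset_Ico_self hs)).le)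
    rw [hθ0, hθ'0] at this
    linarith
  have hct : c * t ≤ 1 := by
    rw [le_div_iff₀ hc] at hTc
    nlinarith [ht.2]
  rcases ha.2.eq_or_lt with rfl | hat
  · linarith
  · nlinarith [mul_lt_mul_of_pos_left hat hc]

theorem monotoneOn_integral_of_nonneg {f : ℝ → ℝ} {a b : ℝ} (hf : IntegrableOn f (Icc a b))
    (hnonneg : ∀ t ∈ Icc a b, 0 ≤ f t) : MonotoneOn (fun t => ∫ s in a..t, f s) (Icc a b) := by
  have hint : ∀ x ∈ Icc a b, IntervalIntegrable f volume a x := fun x hx =>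
    (intervalIntegrable_iff_integrableOn_Icc_of_le hx.1).2
      (hf.mono_set (Icc_subset_Icc le_rfl hx.2))
  intro x hx y hy hxy
  have hdiff := integral_interval_sub_left (hint y hy) (hint x hx)
  have : 0 ≤ ∫ s in x..y, f s :=
    integral_nonneg hxy fun s hs => hnonneg s ⟨hx.1.trans hs.1, hs.2.trans hy.2⟩
  simp only
  linarith

theorem stmt_9_general (c T : ℝ) (hc : 0 < c) (hTc : T ≤ 1 / c)
    (F θ θ' : ℝ → ℝ)
    (hFnonpos : ∀ t ∈ Icc 0 T, F t ≤ 0)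
    (hθ : ∀ t ∈ Icc 0 T, HasDerivAt θ (θ' t) t)
    (hθ' : ∀ t ∈ Icc 0 T, HasDerivAt θ' (-(F t * θ t)) t)
    (hθ0 : θ 0 = 1) (hθ'0 : θ' 0 = -c)
    (V : ℝ → ℝ) (hV : ∀ t, V t = ∫ s in (0:ℝ)..t, θ s) :
    (∀ t ∈ Icc 0 T, 0 ≤ V t) ∧ V 0 = 0 ∧ MonotoneOn V (Icc 0 T) := by
  obtain rfl : V = fun t => ∫ s in (0:ℝ)..t, θ s := funext hV
  have hθcont : ContinuousOn θ (Icc 0 T) := fun t ht => (hθ t ht).continuousAt.continuousWithinAt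
  have hmono : MonotoneOn (fun t => ∫ s in (0:ℝ)..t, θ s) (Icc 0 T) :=
    monotoneOn_integral_of_nonneg hθcont.integrableOn_Icc
      (nonneg_of_hasDerivAt_neg_mul hc hTc hFnonpos hθ hθ' hθ0 hθ'0)
  refine ⟨fun t ht => ?_, integral_same, hmono⟩
  simpa using hmono ⟨le_rfl, ht.1.trans ht.2⟩ ht ht.1

/-- With `c > 0`, `T ≤ 1/c`, `F` continuous nonpositive on `[0,T]`, `θ'' + Fθ = 0`,
`θ(0) = 1`, `θ'(0) = -c`, and `V(t) = ∫₀ᵗ θ`, the function `V` is nonnegative on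
`[0,T]`, `V(0) = 0`, and `V` is nondecreasing on `[0,T]`. -/
theorem stmt_9 (c T : ℝ) (hc : 0 < c) (hT : 0 < T) (hTc : T ≤ 1 / c)
    (F θ θ' : ℝ → ℝ)
    (hFcont : ContinuousOn F (Icc 0 T))
    (hFnonpos : ∀ t ∈ Icc 0 T, F t ≤ 0)
    (hθ : ∀ t ∈ Icc 0 T, HasDerivAt θ (θ' t) t)
    (hθ' : ∀ t ∈ Icc 0 T, HasDerivAt θ' (-(F t * θ t)) t)
    (hθ0 : θ 0 = 1) (hθ'0 : θ' 0 = -c)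
    (V : ℝ → ℝ) (hV : ∀ t, V t = ∫ s in (0:ℝ)..t, θ s) :
    (∀ t ∈ Icc 0 T, 0 ≤ V t) ∧ V 0 = 0 ∧ MonotoneOn V (Icc 0 T) :=
  stmt_9_general c T hc hTc F θ θ' hFnonpos hθ hθ' hθ0 hθ'0 V hV
end
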